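/- arXiv:2404.00536 — 2 statements merged into one kernel-verified Lean document; each statement's English description precedes it below -/
import Mathlib

section
/- For any two ordered set partitions f, g of {1,...,n}, the support of their Tits product equals the meet (common refinement) of their supports in the lattice of unordered set partitions: σ(f·g) = σ(f) ∧ σ(g). -/
/-- The Tits product of two ordered set partitions (as lists of blocks):
all nonempty intersections `Pᵢ ∩ Qⱼ` in lexicographic order of `(i, j)`. -/
def titsProd {n : ℕ} (P Q : List (Finset (Fin n))) : List (Finset (Fin n)) :=
  (P.map (fun Pi => (Q.map (fun Qj => Pi ∩ Qj)).filter (fun s => s ≠ ∅))).flatten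

/-- `P` is an ordered set partition of `{1,…,n}`: a list of pairwise disjoint
nonempty subsets whose union is everything. -/
def IsOSP {n : ℕ} (P : List (Finset (Fin n))) : Prop :=
  (∀ s ∈ P, s ≠ ∅) ∧ P.Pairwise (fun s t => Disjoint s t) ∧
    P.foldr (· ∪ ·) ∅ = (Finset.univ : Finset (Fin n))

open Finset in
/-- The support (underlying unordered set partition) of the Tits product `f·g`
is the common refinement of the supports of `f` and `g`: its blocks are the
nonempty pairwise intersections of blocks of `f` and of `g`. -/
theorem support_titsProd {n : ℕ} (f g : List (Finset (Fin n)))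
    (hf : IsOSP f) (hg : IsOSP g) :
    (titsProd f g).toFinset =
      ((f.toFinset ×ˢ g.toFinset).image (fun p => p.1 ∩ p.2)).erase ∅ := by
  ext s
  simp only [titsProd, List.mem_toFinset, List.mem_flatten, List.mem_map, List.mem_filter,
    Finset.mem_erase, Finset.mem_image, Finset.mem_product, List.mem_toFinset]
  constructor
  · rintro hs
    obtain ⟨l, ⟨Pi, hPi, hl⟩, hsl⟩ := hs
    subst hl
    rw [List.mem_filter] at hsl
    obtain ⟨hm, hne⟩ := hsl
    obtain ⟨Qj, hQj, rfl⟩ := List.mem_map.mp hm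
    simp only [decide_not, Bool.not_eq_true', decide_eq_false_iff_not] at hne
    exact ⟨hne, ⟨Pi, Qj⟩, ⟨hPi, hQj⟩, rfl⟩
  · rintro ⟨hne, ⟨Pi, Qj⟩, ⟨hPi, hQj⟩, rfl⟩
    refine ⟨_, ⟨Pi, hPi, rfl⟩, ?_⟩
    rw [List.mem_filter]
    exact ⟨List.mem_map.mpr ⟨Qj, hQj, rfl⟩, by simpa using hne⟩
end

section
/- The lexicographically minimal representative of any nonempty necklace (equivalence class of words under cyclic rotation) on the alphabet of positive integers is a positive power w^i of a unique Lyndon word w, and the pair (w,i) is uniquely determined by the necklace. Consequently, the map sending a necklace to this pair (w,i) is a bijection from the set of nonempty necklaces to the set of pairs (Lyndon word, positive integer). -/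
/-- A word is Lyndon if it is nonempty and lexicographically strictly smaller
than all of its nontrivial cyclic rotations. -/
def IsLyndon {α : Type*} [LinearOrder α] (w : List α) : Prop :=
  w ≠ [] ∧ ∀ i : ℕ, 0 < i → i < w.length → List.Lex (· < ·) w (w.rotate i)

/-- Two words are rotation-equivalent (lie in the same necklace) if one is a
cyclic rotation of the other. -/
def RotEq (a b : List ℕ+) : Prop := ∃ k : ℕ, a.rotate k = b

/-- The `i`-fold concatenation power `u^i` of a word `u`. -/
def powWord (u : List ℕ+) (i : ℕ) : List ℕ+ := (List.replicate i u).flatten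

namespace NecklaceAux

open List

lemma powWord_zero (u : List ℕ+) : powWord u 0 = [] := rfl

lemma powWord_succ (u : List ℕ+) (i : ℕ) : powWord u (i + 1) = u ++ powWord u i := by
  simp [powWord, List.replicate_succ]

lemma powWord_length (u : List ℕ+) (i : ℕ) : (powWord u i).length = i * u.length := by
  induction i with
  | zero => simp [powWord]
  | succ n ih => rw [powWord_succ, List.length_append, ih]; ring

lemma powWord_take (u : List ℕ+) {i : ℕ} (hi : 0 < i) : (powWord u i).take u.length = u := by
  obtain ⟨n, rfl⟩ := Nat.exists_eq_add_of_lt hi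
  rw [Nat.zero_add, powWord_succ, List.take_left]

lemma powWord_append_comm (x y : List ℕ+) (i : ℕ) :
    powWord (x ++ y) i ++ x = x ++ powWord (y ++ x) i := by
  induction i with
  | zero => simp [powWord_zero]
  | succ n ih =>
      rw [powWord_succ, powWord_succ, List.append_assoc, List.append_assoc, ih]
      simp [List.append_assoc]

lemma rotate_powWord (u : List ℕ+) (i j : ℕ) (hj : j ≤ u.length) :
    (powWord u i).rotate j = powWord (u.rotate j) i := by
  cases i with
  | zero => simp [powWord_zero]
  | succ n =>
      have hlen : j ≤ (powWord u (n + 1)).length := by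
        rw [powWord_length]
        calc j ≤ u.length := hj
        _ ≤ (n + 1) * u.length := Nat.le_mul_of_pos_left _ (Nat.succ_pos n)
      rw [rotate_eq_drop_append_take hlen, rotate_eq_drop_append_take hj, powWord_succ,
        List.drop_append_of_le_length hj, List.take_append_of_le_length hj]
      have hu : u = u.take j ++ u.drop j := (take_append_drop j u).symm
      calc u.drop j ++ powWord u n ++ u.take j
          = u.drop j ++ (powWord (u.take j ++ u.drop j) n ++ u.take j) := by
            rw [← hu, List.append_assoc]
        _ = u.drop j ++ (u.take j ++ powWord (u.drop j ++ u.take j) n) := by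
            rw [powWord_append_comm]
        _ = powWord (u.drop j ++ u.take j) (n + 1) := by
            rw [powWord_succ, List.append_assoc]

lemma rotate_powWord_length (u : List ℕ+) (i : ℕ) :
    (powWord u i).rotate u.length = powWord u i := by
  rw [rotate_powWord u i u.length le_rfl, rotate_length]

lemma rotate_fix_mul {v : List ℕ+} {d : ℕ} (h : v.rotate d = v) (q : ℕ) :
    v.rotate (d * q) = v := by
  induction q with
  | zero => simp
  | succ n ih => rw [Nat.mul_succ, ← rotate_rotate, ih, h]

lemma lex_append : ∀ {x y : List ℕ+}, List.Lex (· < ·) x y → x.length = y.length →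
    ∀ s t : List ℕ+, List.Lex (· < ·) (x ++ s) (y ++ t)
  | _, _, List.Lex.nil, hl => by simp at hl
  | _, _, List.Lex.cons h, hl => fun s t =>
      List.Lex.cons (lex_append h (by simpa using hl) s t)
  | _, _, List.Lex.rel h, _ => fun _ _ => List.Lex.rel h

lemma powWord_lt {x y : List ℕ+} (hl : x.length = y.length) (h : x < y) {i : ℕ} (hi : 0 < i) :
    powWord x i < powWord y i := by
  obtain ⟨n, rfl⟩ := Nat.exists_eq_add_of_lt hi
  rw [Nat.zero_add, powWord_succ, powWord_succ]
  exact lex_append h hl _ _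

lemma powWord_inj {x y : List ℕ+} (hl : x.length = y.length) {i : ℕ} (hi : 0 < i)
    (h : powWord x i = powWord y i) : x = y := by
  have h2 := congrArg (List.take x.length) h
  rwa [powWord_take x hi, hl, powWord_take y hi] at h2

/-! ### Periods -/

lemma per_exists (v : List ℕ+) : ∃ k, 0 < k ∧ v.rotate k = v := by
  rcases eq_or_ne v [] with rfl | h
  · exact ⟨1, one_pos, rfl⟩
  · exact ⟨v.length, List.length_pos_iff.2 h, v.rotate_length⟩

/-- The least period (smallest positive `k` with `v.rotate k = v`). -/
def per (v : List ℕ+) : ℕ := Nat.find (per_exists v)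

lemma per_pos (v : List ℕ+) : 0 < per v := (Nat.find_spec (per_exists v)).1

lemma rotate_per (v : List ℕ+) : v.rotate (per v) = v := (Nat.find_spec (per_exists v)).2

lemma per_min (v : List ℕ+) {k : ℕ} (hk : 0 < k) (hlt : k < per v) : v.rotate k ≠ v :=
  fun h => Nat.find_min (per_exists v) hlt ⟨hk, h⟩

lemma per_le_length {v : List ℕ+} (h : v ≠ []) : per v ≤ v.length :=
  Nat.find_le ⟨List.length_pos_iff.2 h, v.rotate_length⟩

lemma per_dvd (v : List ℕ+) : per v ∣ v.length := by
  have key : v.rotate (v.length % per v) = v := by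
    calc v.rotate (v.length % per v)
        = (v.rotate (per v * (v.length / per v))).rotate (v.length % per v) := by
          rw [rotate_fix_mul (rotate_per v)]
      _ = v.rotate (per v * (v.length / per v) + v.length % per v) := rotate_rotate _ _ _
      _ = v.rotate v.length := by rw [Nat.div_add_mod]
      _ = v := v.rotate_length
  by_contra hnd
  have hpos : 0 < v.length % per v :=
    Nat.pos_of_ne_zero fun h0 => hnd (Nat.dvd_of_mod_eq_zero h0)
  exact per_min v hpos (Nat.mod_lt _ (per_pos v)) key

/-! ### Decomposition into a power of the primitive root -/

lemma eq_powWord_of_rotate : ∀ (m : ℕ) {d : ℕ} {v : List ℕ+}, v.length = m * d →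
    v.rotate d = v → v = powWord (v.take d) m := by
  intro m
  induction m with
  | zero =>
      intro d v hlen _
      have : v = [] := List.length_eq_zero_iff.1 (by simpa using hlen)
      simp [this, powWord_zero]
  | succ n ih =>
      intro d v hlen hrot
      rcases Nat.eq_zero_or_pos d with rfl | hd
      · have : v = [] := List.length_eq_zero_iff.1 (by simpa using hlen)
        simp [this, powWord]
      have hdlen : d ≤ v.length := by
        rw [hlen]; exact Nat.le_mul_of_pos_left _ (Nat.succ_pos n)
      have hxy : v = v.take d ++ v.drop d := (take_append_drop d v).symm
      have hxlen : (v.take d).length = d := by rw [length_take]; omega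
      have hylen : (v.drop d).length = n * d := by rw [length_drop, hlen]; ring_nf; omega
      have hcomm : v.drop d ++ v.take d = v.take d ++ v.drop d := by
        calc v.drop d ++ v.take d = v.rotate d := (rotate_eq_drop_append_take hdlen).symm
          _ = v := hrot
          _ = v.take d ++ v.drop d := hxy
      rcases Nat.eq_zero_or_pos n with rfl | hn
      · have hy : v.drop d = [] := List.length_eq_zero_iff.1 (by simp [hylen])
        rw [powWord_succ, powWord_zero, List.append_nil]
        conv_lhs => rw [hxy, hy, List.append_nil]
      · have hdy : d ≤ (v.drop d).length := by
          rw [hylen]; exact Nat.le_mul_of_pos_left _ hn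
        have hytake : (v.drop d).take d = v.take d := by
          have h2 : (v.drop d ++ v.take d).take d = (v.take d ++ v.drop d).take d := by
            rw [hcomm]
          rwa [take_append_of_le_length hdy, take_append_of_le_length (le_of_eq hxlen.symm),
            List.take_of_length_le (le_of_eq hxlen)] at h2
        have hyrot : (v.drop d).rotate d = v.drop d := by
          have h2 : v.drop d = v.take d ++ (v.drop d).drop d := by
            conv_lhs => rw [← take_append_drop d (v.drop d), hytake]
          have h3 : v.take d ++ (v.take d ++ (v.drop d).drop d)
              = (v.take d ++ (v.drop d).drop d) ++ v.take d := by
            rw [← h2, hcomm.symm]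
          have h4 : v.take d ++ (v.drop d).drop d = (v.drop d).drop d ++ v.take d := by
            rw [List.append_assoc] at h3
            exact (List.append_cancel_left h3).symm ▸ rfl
          rw [rotate_eq_drop_append_take hdy, hytake, ← h4, ← h2]
        have hrec := ih hylen hyrot
        rw [hytake] at hrec
        calc v = v.take d ++ v.drop d := hxy
          _ = v.take d ++ powWord (v.take d) n := by rw [← hrec]
          _ = powWord (v.take d) (n + 1) := (powWord_succ _ _).symm

/-- The primitive root of a word. -/
def primRoot (v : List ℕ+) : List ℕ+ := v.take (per v)

/-- The exponent of a word over its primitive root. -/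
def pexp (v : List ℕ+) : ℕ := v.length / per v

lemma primRoot_length {v : List ℕ+} (h : v ≠ []) : (primRoot v).length = per v := by
  rw [primRoot, length_take]; exact min_eq_left (per_le_length h)

lemma pexp_pos {v : List ℕ+} (h : v ≠ []) : 0 < pexp v :=
  Nat.div_pos (per_le_length h) (per_pos v)

lemma decomp (v : List ℕ+) : v = powWord (primRoot v) (pexp v) :=
  eq_powWord_of_rotate (pexp v) (Nat.div_mul_cancel (per_dvd v)).symm (rotate_per v)

lemma primRoot_ne_nil {v : List ℕ+} (h : v ≠ []) : primRoot v ≠ [] := by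
  intro h0
  have h1 := primRoot_length h
  rw [h0] at h1
  have h2 := per_pos v
  simp only [List.length_nil] at h1
  omega

lemma primRoot_lyndon {v : List ℕ+} (h : v ≠ []) (hmin : ∀ k, v ≤ v.rotate k) :
    IsLyndon (primRoot v) := by
  refine ⟨primRoot_ne_nil h, ?_⟩
  intro j hj hjlen
  have hulen : (primRoot v).length = per v := primRoot_length h
  rw [hulen] at hjlen
  have hj' : j ≤ (primRoot v).length := by omega
  have hv : v = powWord (primRoot v) (pexp v) := decomp v
  have hrot : v.rotate j = powWord ((primRoot v).rotate j) (pexp v) := by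
    conv_lhs => rw [hv]
    exact rotate_powWord _ _ _ hj'
  have hne : primRoot v ≠ (primRoot v).rotate j := by
    intro he
    have : v.rotate j = v := by rw [hrot, ← he, ← hv]
    exact per_min v hj hjlen this
  rcases lt_trichotomy (primRoot v) ((primRoot v).rotate j) with hlt | heq | hgt
  · exact hlt
  · exact absurd heq hne
  · exfalso
    have h1 : powWord ((primRoot v).rotate j) (pexp v) < powWord (primRoot v) (pexp v) :=
      powWord_lt (length_rotate _ _) hgt (pexp_pos h)
    have h2 : v ≤ v.rotate j := hmin j
    rw [hrot] at h2
    conv_lhs at h2 => rw [hv]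
    exact absurd (lt_of_le_of_lt h2 h1) (lt_irrefl _)

/-! ### Powers of Lyndon words are minimal among their rotations -/

lemma lyndonPow_min {w : List ℕ+} (hw : IsLyndon w) {i : ℕ} (hi : 0 < i) (k : ℕ) :
    powWord w i ≤ (powWord w i).rotate k := by
  have hwl : 0 < w.length := List.length_pos_iff.2 hw.1
  have hred : (powWord w i).rotate k = (powWord w i).rotate (k % w.length) := by
    conv_lhs => rw [← Nat.div_add_mod k w.length, ← rotate_rotate,
      rotate_fix_mul (rotate_powWord_length w i)]
  rw [hred]
  rcases Nat.eq_zero_or_pos (k % w.length) with h0 | hrpos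
  · rw [h0, rotate_zero]
  · have hr : k % w.length < w.length := Nat.mod_lt _ hwl
    rw [rotate_powWord w i _ hr.le]
    have hlt : w < w.rotate (k % w.length) := hw.2 _ hrpos hr
    exact le_of_lt (powWord_lt (length_rotate w _).symm hlt hi)

lemma per_lyndonPow {w : List ℕ+} (hw : IsLyndon w) {i : ℕ} (hi : 0 < i) :
    per (powWord w i) = w.length := by
  have hwl : 0 < w.length := List.length_pos_iff.2 hw.1
  have hle : per (powWord w i) ≤ w.length := Nat.find_le ⟨hwl, rotate_powWord_length w i⟩
  rcases lt_or_eq_of_le hle with hlt | he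
  · exfalso
    have hd := rotate_per (powWord w i)
    rw [rotate_powWord w i _ hlt.le] at hd
    have hww : w.rotate (per (powWord w i)) = w :=
      powWord_inj (length_rotate _ _) hi hd
    have hl := hw.2 _ (per_pos _) hlt
    rw [hww] at hl
    exact lt_irrefl w hl
  · exact he

lemma primRoot_lyndonPow {w : List ℕ+} (hw : IsLyndon w) {i : ℕ} (hi : 0 < i) :
    primRoot (powWord w i) = w := by
  rw [primRoot, per_lyndonPow hw hi, powWord_take w hi]

lemma pexp_lyndonPow {w : List ℕ+} (hw : IsLyndon w) {i : ℕ} (hi : 0 < i) :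
    pexp (powWord w i) = i := by
  have hwl : 0 < w.length := List.length_pos_iff.2 hw.1
  rw [pexp, per_lyndonPow hw hi, powWord_length, Nat.mul_div_cancel _ hwl]

/-! ### The minimal rotation -/

def rotFinset (v : List ℕ+) : Finset (List ℕ+) := (Finset.range v.length).image (v.rotate ·)

lemma mem_rotFinset {v x : List ℕ+} (h : v ≠ []) : x ∈ rotFinset v ↔ ∃ k, v.rotate k = x := by
  simp only [rotFinset, Finset.mem_image, Finset.mem_range]
  constructor
  · rintro ⟨k, _, hk⟩; exact ⟨k, hk⟩
  · rintro ⟨k, hk⟩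
    exact ⟨k % v.length, Nat.mod_lt _ (List.length_pos_iff.2 h), by rwa [rotate_mod]⟩

lemma rotFinset_nonempty {v : List ℕ+} (h : v ≠ []) : (rotFinset v).Nonempty :=
  ⟨v, (mem_rotFinset h).2 ⟨0, rotate_zero v⟩⟩

noncomputable def minRot (v : List ℕ+) : List ℕ+ :=
  if h : v = [] then [] else (rotFinset v).min' (rotFinset_nonempty h)

lemma minRot_is_rotate {v : List ℕ+} (h : v ≠ []) : ∃ k, v.rotate k = minRot v := by
  rw [minRot, dif_neg h]
  exact (mem_rotFinset h).1 ((rotFinset v).min'_mem (rotFinset_nonempty h))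

lemma minRot_le {v : List ℕ+} (h : v ≠ []) (k : ℕ) : minRot v ≤ v.rotate k := by
  rw [minRot, dif_neg h]
  exact Finset.min'_le _ _ ((mem_rotFinset h).2 ⟨k, rfl⟩)

lemma minRot_ne_nil {v : List ℕ+} (h : v ≠ []) : minRot v ≠ [] := by
  obtain ⟨k, hk⟩ := minRot_is_rotate h
  intro h0
  rw [h0] at hk
  exact h (by simpa using congrArg List.length hk)

lemma minRot_min {v : List ℕ+} (h : v ≠ []) (k : ℕ) : minRot v ≤ (minRot v).rotate k := by
  obtain ⟨j, hj⟩ := minRot_is_rotate h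
  conv_rhs => rw [← hj, rotate_rotate]
  exact minRot_le h _

lemma rotEq_iff {a b : List ℕ+} : RotEq a b ↔ a ~r b := Iff.rfl

lemma minRot_eq {a b : List ℕ+} (hab : RotEq a b) (ha : a ≠ []) : minRot a = minRot b := by
  have hb : b ≠ [] := by
    obtain ⟨k, hk⟩ := hab
    intro h0; rw [h0] at hk
    exact ha (by simpa using congrArg List.length hk)
  have hset : rotFinset a = rotFinset b := by
    ext x
    rw [mem_rotFinset ha, mem_rotFinset hb]
    constructor
    · rintro hx
      exact (((rotEq_iff.1 hab).symm.trans hx) : b ~r x)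
    · rintro hx
      exact (((rotEq_iff.1 hab).trans hx) : a ~r x)
  rw [minRot, minRot, dif_neg ha, dif_neg hb]
  congr 1

/-! ### The bijection -/

noncomputable def g (w : {w : List ℕ+ // w ≠ []}) :
    {p : List ℕ+ × ℕ // IsLyndon p.1 ∧ 0 < p.2} :=
  ⟨(primRoot (minRot w.1), pexp (minRot w.1)),
    primRoot_lyndon (minRot_ne_nil w.2) (minRot_min w.2),
    pexp_pos (minRot_ne_nil w.2)⟩

lemma g_respects : ∀ a b : {w : List ℕ+ // w ≠ []}, RotEq a.1 b.1 → g a = g b := by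
  intro a b hab
  have h := minRot_eq hab a.2
  simp only [g, h]

end NecklaceAux

open NecklaceAux in
/-- The map sending a nonempty necklace (equivalence class of words under
cyclic rotation) to the pair `(w, i)` such that the lexicographically minimal
representative of the necklace is `w^i` with `w` Lyndon and `i ≥ 1` is a
bijection from nonempty necklaces to pairs (Lyndon word, positive integer). -/
theorem necklace_lyndon_power_bijection :
    ∃ F : Quot (fun a b : {w : List ℕ+ // w ≠ []} => RotEq a.1 b.1) →
        {p : List ℕ+ × ℕ // IsLyndon p.1 ∧ 0 < p.2},
      Function.Bijective F ∧
      ∀ w : {w : List ℕ+ // w ≠ []},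
        RotEq w.1 (powWord (F (Quot.mk _ w)).1.1 (F (Quot.mk _ w)).1.2) ∧
        ∀ k : ℕ, powWord (F (Quot.mk _ w)).1.1 (F (Quot.mk _ w)).1.2 ≤ w.1.rotate k := by
  refine ⟨Quot.lift g g_respects, ⟨?_, ?_⟩, ?_⟩
  · -- injective
    intro q1 q2 h
    obtain ⟨a, rfl⟩ := Quot.exists_rep q1
    obtain ⟨b, rfl⟩ := Quot.exists_rep q2
    have h' : g a = g b := h
    have hval : ((g a : {p : List ℕ+ × ℕ // IsLyndon p.1 ∧ 0 < p.2}) : List ℕ+ × ℕ)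
        = ((g b : {p : List ℕ+ × ℕ // IsLyndon p.1 ∧ 0 < p.2}) : List ℕ+ × ℕ) :=
      congrArg Subtype.val h'
    have hp1 : primRoot (minRot a.1) = primRoot (minRot b.1) := congrArg Prod.fst hval
    have hp2 : pexp (minRot a.1) = pexp (minRot b.1) := congrArg Prod.snd hval
    have hm : minRot a.1 = minRot b.1 := by
      rw [decomp (minRot a.1), decomp (minRot b.1), hp1, hp2]
    apply Quot.sound
    obtain ⟨j, hj⟩ := minRot_is_rotate a.2
    obtain ⟨k, hk⟩ := minRot_is_rotate b.2
    show RotEq a.1 b.1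
    rw [rotEq_iff]
    have r1 : a.1 ~r minRot a.1 := ⟨j, hj⟩
    have r2 : b.1 ~r minRot b.1 := ⟨k, hk⟩
    have r3 : minRot a.1 ~r b.1 := by rw [hm]; exact r2.symm
    exact r1.trans r3
  · -- surjective
    rintro ⟨⟨w, i⟩, hw, hi⟩
    have hne : powWord w i ≠ [] := by
      intro h0
      have hl := congrArg List.length h0
      rw [powWord_length] at hl
      simp only [List.length_nil] at hl
      rcases Nat.mul_eq_zero.1 hl with h | h
      · omega
      · exact hw.1 (List.length_eq_zero_iff.1 h)
    refine ⟨Quot.mk _ ⟨powWord w i, hne⟩, ?_⟩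
    have hminrot : minRot (powWord w i) = powWord w i := by
      apply le_antisymm
      · have h2 := minRot_le hne 0
        rwa [List.rotate_zero] at h2
      · obtain ⟨j, hj⟩ := minRot_is_rotate hne
        rw [← hj]
        exact lyndonPow_min hw hi j
    show g ⟨powWord w i, hne⟩ = ⟨(w, i), hw, hi⟩
    apply Subtype.ext
    show (primRoot (minRot (powWord w i)), pexp (minRot (powWord w i))) = (w, i)
    rw [hminrot, primRoot_lyndonPow hw hi, pexp_lyndonPow hw hi]
  · -- specification
    intro w
    constructor
    · show RotEq w.1 (powWord (primRoot (minRot w.1)) (pexp (minRot w.1)))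
      rw [← decomp]
      exact minRot_is_rotate w.2
    · intro k
      show powWord (primRoot (minRot w.1)) (pexp (minRot w.1)) ≤ w.1.rotate k
      rw [← decomp]
      exact minRot_le w.2 k
end
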